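/- arXiv:1402.0643 — 4 statements merged into one kernel-verified Lean document; each statement's English description precedes it below -/
import Mathlib

section
/- Let K be a field, (x, y_1, ..., y_s) a point in K^{s+1}, and R_1, ..., R_s polynomials in K[X] with R_j(x) = y_j for all j. Then for any polynomial Q in K[X, Y_1, ..., Y_s] and positive integer m, the point (x, y_1,...,y_s) is a zero of Q of multiplicity at least m (i.e., Q(X+x, Y_1+y_1,...,Y_s+y_s) has no monomial of total degree less than m) if and only if for every multi-index i ∈ ℤ_{≥0}^s with |i| < m, the polynomial Q^{[i]}(X, R_1, ..., R_s) is divisible by (X - x)^{m - |i|}, where Q^{[i]} denotes the order-i Hasse derivative of Q with respect to the variables Y_1,...,Y_s. -/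
/-! Substituting `X ↦ X + x` turns divisibility by `(X - x)^n` into divisibility by `X^n`, and
turns `R_k` into `y_k + S_k` with `X ∣ S_k`. By Taylor's formula the coefficient of `Y^t` in
`P = Q(X + x, Y + y)` is the `t`-th Hasse derivative evaluated at `y`; since Hasse derivatives
commute with translation, `Q^{[i]}(X, R)` becomes
`P^{[i]}(X, S) = Σ_{j ≥ i} binom(j,i) P_j S^{j-i}`, where `X^{|j|-|i|}` divides `S^{j-i}`.
Hence `X^{m-|j|} ∣ P_j` for all `j` gives the divisibilities; conversely, they recover
`X^{m-|j|} ∣ P_j` by downward induction on `|j|`, because `P^{[j]}(S)` is `P_j` plus terms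
coming from coefficients of larger degree. -/

/-- The order-`i` Hasse derivative with respect to the variables `Y_1,...,Y_s`
of `Q = Σ_j Q_j(X) Y^j`, namely `Σ_{j ≥ i} binom(j,i) Q_j(X) Y^{j-i}`. -/
noncomputable def mvHasseDeriv {R : Type*} [CommSemiring R] {σ : Type*} (i : σ →₀ ℕ)
    (P : MvPolynomial σ R) : MvPolynomial σ R :=
  ∑ j ∈ P.support, (fun j c =>
    if i ≤ j then
      (∏ k ∈ i.support, Nat.choose (j k) (i k)) • MvPolynomial.monomial (j - i) c
    else 0) j (P.coeff j)

/-- The shifted polynomial `Q(X + x, Y_1 + y_1, ..., Y_s + y_s)`. -/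
noncomputable def shiftPoint {K : Type*} [Field K] {s : ℕ} (x : K) (y : Fin s → K)
    (Q : MvPolynomial (Fin s) (Polynomial K)) : MvPolynomial (Fin s) (Polynomial K) :=
  MvPolynomial.eval₂
    ((MvPolynomial.C).comp (Polynomial.aeval (Polynomial.X + Polynomial.C x)).toRingHom)
    (fun k => MvPolynomial.X k + MvPolynomial.C (Polynomial.C (y k))) Q

/-- `(x, y)` is a zero of `Q` of multiplicity at least `m`: the shifted polynomial
`Q(X+x, Y+y)` has no monomial of total degree less than `m`. -/
def VanishesAt {K : Type*} [Field K] {s : ℕ} (Q : MvPolynomial (Fin s) (Polynomial K))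
    (x : K) (y : Fin s → K) (m : ℕ) : Prop :=
  ∀ (j : Fin s →₀ ℕ) (h : ℕ), h + (j.sum fun _ e => e) < m →
    Polynomial.coeff (MvPolynomial.coeff j (shiftPoint x y Q)) h = 0

open MvPolynomial

section HasseDeriv

variable {R σ : Type*} [CommSemiring R]

def mvChoose (j i : σ →₀ ℕ) : ℕ := ∏ k ∈ i.support, (j k).choose (i k)

@[simp]
theorem mvChoose_self (i : σ →₀ ℕ) : mvChoose i i = 1 :=
  Finset.prod_eq_one fun k _ => Nat.choose_self (i k)

theorem mvChoose_eq_prod_univ [Fintype σ] (j i : σ →₀ ℕ) :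
    mvChoose j i = ∏ k, (j k).choose (i k) :=
  Finset.prod_subset (Finset.subset_univ _) fun k _ hk => by
    rw [Finsupp.notMem_support_iff.mp hk, Nat.choose_zero_right]

theorem coeff_mvHasseDeriv (i t : σ →₀ ℕ) (P : MvPolynomial σ R) :
    coeff t (mvHasseDeriv i P) = mvChoose (t + i) i • coeff (t + i) P := by
  classical
  rw [mvHasseDeriv, coeff_sum, Finset.sum_eq_single (t + i)]
  · beta_reduce
    rw [if_pos le_add_self, coeff_smul, add_tsub_cancel_right, coeff_monomial, if_pos rfl]
    rfl
  · intro j _ hj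
    beta_reduce
    split_ifs with hij
    · rw [coeff_smul, coeff_monomial, if_neg, smul_zero]
      rintro rfl
      exact hj (tsub_add_cancel_of_le hij).symm
    · rfl
  · intro h
    simp [notMem_support_iff.mp h]

theorem mvHasseDeriv_mvHasseDeriv [Fintype σ] (t i : σ →₀ ℕ) (P : MvPolynomial σ R) :
    mvHasseDeriv t (mvHasseDeriv i P) = mvChoose (t + i) i • mvHasseDeriv (t + i) P := by
  ext u
  simp only [coeff_smul, coeff_mvHasseDeriv, smul_smul, add_assoc]
  congr 1
  simp only [mvChoose_eq_prod_univ, ← Finset.prod_mul_distrib]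
  refine Finset.prod_congr rfl fun k _ => ?_
  have h := Nat.choose_mul (n := u k + t k + i k) (Nat.le_add_left (i k) (t k))
  rw [Nat.add_sub_cancel, Nat.add_sub_cancel] at h
  simp only [Finsupp.add_apply, ← add_assoc]
  linarith

theorem mvHasseDeriv_map {S : Type*} [CommSemiring S] (f : R →+* S) (i : σ →₀ ℕ)
    (P : MvPolynomial σ R) :
    mvHasseDeriv i (map f P) = map f (mvHasseDeriv i P) := by
  ext t
  rw [coeff_mvHasseDeriv, coeff_map, coeff_map, coeff_mvHasseDeriv, map_nsmul]

theorem eval_mvHasseDeriv (g : σ → R) (i : σ →₀ ℕ) (P : MvPolynomial σ R) :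
    eval g (mvHasseDeriv i P) = ∑ j ∈ P.support,
      if i ≤ j then mvChoose j i • (coeff j P * (j - i).prod fun k e => g k ^ e) else 0 := by
  simp only [mvHasseDeriv, map_sum, apply_ite, map_nsmul, eval_monomial, map_zero]
  rfl

end HasseDeriv

section Taylor

variable {R σ : Type*} [CommSemiring R] [Fintype σ]

theorem coeff_prod_X_add_C_pow (a : σ → R) (j t : σ →₀ ℕ) :
    coeff t (∏ k, (X k + C (a k)) ^ j k) =
      if t ≤ j then mvChoose j t • ∏ k, a k ^ (j - t) k else 0 := by
  classical
  have hterm : ∀ p : σ → ℕ,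
      ∏ k, X k ^ p k * C (a k) ^ (j k - p k) * ((j k).choose (p k) : MvPolynomial σ R) =
        monomial (Finsupp.equivFunOnFinite.symm p)
          (∏ k, (j k).choose (p k) * a k ^ (j k - p k)) := by
    intro p
    rw [monomial_eq, Finsupp.prod_fintype _ _ fun k => pow_zero _, map_prod,
      ← Finset.prod_mul_distrib]
    refine Finset.prod_congr rfl fun k _ => ?_
    simp only [Finsupp.coe_equivFunOnFinite_symm, map_mul, map_pow, map_natCast]
    ring
  simp_rw [add_pow, Finset.prod_univ_sum, hterm, coeff_sum, coeff_monomial,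
    Equiv.symm_apply_eq, Finset.sum_ite_eq']
  have hmem : Finsupp.equivFunOnFinite t ∈ Fintype.piFinset (fun k => Finset.range (j k + 1)) ↔
      t ≤ j := by
    simp [Fintype.mem_piFinset, Finsupp.le_def]
  simp only [hmem, mvChoose_eq_prod_univ, nsmul_eq_mul, Nat.cast_prod, Finset.prod_mul_distrib]
  rfl

theorem coeff_aeval_X_add_C (a : σ → R) (P : MvPolynomial σ R) (t : σ →₀ ℕ) :
    coeff t (aeval (fun k => X k + C (a k)) P) = eval a (mvHasseDeriv t P) := by
  rw [aeval_def, eval₂_eq', coeff_sum, eval_mvHasseDeriv]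
  refine Finset.sum_congr rfl fun j _ => ?_
  rw [algebraMap_eq, coeff_C_mul, coeff_prod_X_add_C_pow, mul_ite, mul_zero,
    Finsupp.prod_fintype _ _ fun k => pow_zero _, mul_smul_comm]

theorem aeval_X_add_C_mvHasseDeriv (a : σ → R) (i : σ →₀ ℕ) (P : MvPolynomial σ R) :
    aeval (fun k => X k + C (a k)) (mvHasseDeriv i P) =
      mvHasseDeriv i (aeval (fun k => X k + C (a k)) P) := by
  ext t
  rw [coeff_aeval_X_add_C, mvHasseDeriv_mvHasseDeriv, map_nsmul, coeff_mvHasseDeriv,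
    coeff_aeval_X_add_C]

end Taylor

section Divisibility

variable {A σ : Type*} [CommRing A] {π : A} {S : σ → A}

theorem Finsupp.degree_lt_degree_of_lt {i j : σ →₀ ℕ} (hij : i < j) : i.degree < j.degree := by
  have hdeg : (j - i).degree + i.degree = j.degree := by
    rw [← map_add, tsub_add_cancel_of_le hij.le]
  have hpos : (j - i).degree ≠ 0 := by
    rw [Ne, Finsupp.degree_eq_zero_iff, tsub_eq_zero_iff_le]
    exact hij.not_ge
  omega

theorem pow_degree_dvd_prod_pow (hS : ∀ k, π ∣ S k) (d : σ →₀ ℕ) :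
    π ^ d.degree ∣ d.prod fun k e => S k ^ e := by
  rw [Finsupp.degree_apply, ← Finset.prod_pow_eq_pow_sum]
  exact Finset.prod_dvd_prod_of_dvd _ _ fun k _ => pow_dvd_pow_of_dvd (hS k) _

theorem pow_dvd_mul_prod_pow_sub (hS : ∀ k, π ∣ S k) {i j : σ →₀ ℕ} (hij : i ≤ j) {m : ℕ}
    {c : A} (hc : π ^ (m - j.degree) ∣ c) :
    π ^ (m - i.degree) ∣ c * (j - i).prod fun k e => S k ^ e := by
  have hdeg : (j - i).degree + i.degree = j.degree := by
    rw [← map_add, tsub_add_cancel_of_le hij]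
  calc π ^ (m - i.degree) ∣ π ^ (m - j.degree + (j - i).degree) := pow_dvd_pow π (by omega)
    _ = π ^ (m - j.degree) * π ^ (j - i).degree := pow_add π _ _
    _ ∣ _ := mul_dvd_mul hc (pow_degree_dvd_prod_pow hS (j - i))

theorem forall_pow_dvd_coeff_iff_forall_pow_dvd_eval_mvHasseDeriv (hS : ∀ k, π ∣ S k)
    (P : MvPolynomial σ A) (m : ℕ) :
    (∀ j, π ^ (m - j.degree) ∣ coeff j P) ↔
      ∀ i, π ^ (m - i.degree) ∣ eval S (mvHasseDeriv i P) := by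
  classical
  refine ⟨fun hP i => ?_, fun hP j => ?_⟩
  · rw [eval_mvHasseDeriv]
    refine Finset.dvd_sum fun j _ => ?_
    split_ifs with hij
    · rw [nsmul_eq_mul]
      exact (pow_dvd_mul_prod_pow_sub hS hij (hP j)).mul_left _
    · exact dvd_zero _
  induction h : m - j.degree using Nat.strong_induction_on generalizing j with
  | _ n ih =>
  rcases Nat.eq_zero_or_pos n with rfl | hn
  · exact pow_zero π ▸ one_dvd _
  by_cases hj : j ∈ P.support
  swap
  · rw [notMem_support_iff.mp hj]
    exact dvd_zero _
  have hsplit := h ▸ hP j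
  rw [eval_mvHasseDeriv, ← Finset.add_sum_erase _ _ hj, if_pos le_rfl, tsub_self,
    Finsupp.prod_zero_index, mul_one, mvChoose_self, one_smul] at hsplit
  refine (dvd_add_left (Finset.dvd_sum fun j' hj' => ?_)).mp hsplit
  split_ifs with hjj'
  · have hlt := Finsupp.degree_lt_degree_of_lt
      (lt_of_le_of_ne hjj' (Finset.ne_of_mem_erase hj').symm)
    rw [nsmul_eq_mul, ← h]
    exact (pow_dvd_mul_prod_pow_sub hS hjj' (ih _ (by omega) j' rfl)).mul_left _
  · exact dvd_zero _

end Divisibility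

theorem X_sub_C_pow_dvd_iff {A : Type*} [CommRing A] (x : A) (n : ℕ) (p : Polynomial A) :
    (Polynomial.X - Polynomial.C x) ^ n ∣ p ↔
      Polynomial.X ^ n ∣ Polynomial.algEquivAevalXAddC x p := by
  rw [← map_dvd_iff (Polynomial.algEquivAevalXAddC x), map_pow]
  simp

theorem eval_aeval_X_add_C {A : Type*} [CommSemiring A] {σ : Type*} (S a : σ → A)
    (P : MvPolynomial σ A) :
    eval S (aeval (fun k => X k + C (a k)) P) = eval (fun k => S k + a k) P := by
  change aeval S (aeval _ P) = aeval _ P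
  rw [comp_aeval_apply]
  simp

section Shift

variable {K : Type*} [Field K] {s : ℕ}

theorem vanishesAt_iff_forall_X_pow_dvd (Q : MvPolynomial (Fin s) (Polynomial K)) (x : K)
    (y : Fin s → K) (m : ℕ) :
    VanishesAt Q x y m ↔
      ∀ j, Polynomial.X ^ (m - j.degree) ∣ coeff j (shiftPoint x y Q) := by
  refine forall_congr' fun j => ?_
  rw [Polynomial.X_pow_dvd_iff]
  have hdeg : (j.sum fun _ e => e) = j.degree := rfl
  exact forall_congr' fun h => imp_congr_left (by omega)

theorem algEquivAevalXAddC_eval_mvHasseDeriv (x : K) (y : Fin s → K)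
    (R : Fin s → Polynomial K) (Q : MvPolynomial (Fin s) (Polynomial K)) (i : Fin s →₀ ℕ) :
    Polynomial.algEquivAevalXAddC x (eval R (mvHasseDeriv i Q)) =
      eval (fun k => Polynomial.algEquivAevalXAddC x (R k) - Polynomial.C (y k))
        (mvHasseDeriv i (shiftPoint x y Q)) := by
  set φ : Polynomial K →+* Polynomial K :=
    (Polynomial.aeval (Polynomial.X + Polynomial.C x)).toRingHom
  have hshift : shiftPoint x y Q = aeval (fun k => X k + C (Polynomial.C (y k))) (map φ Q) := by
    rw [shiftPoint, aeval_def, eval₂_map]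
    rfl
  calc Polynomial.algEquivAevalXAddC x (eval R (mvHasseDeriv i Q))
      = eval (fun k => φ (R k)) (mvHasseDeriv i (map φ Q)) := by
        rw [mvHasseDeriv_map, eval_map]
        exact eval₂_comp_left φ (RingHom.id _) R _
    _ = _ := by
        rw [hshift, ← aeval_X_add_C_mvHasseDeriv, eval_aeval_X_add_C]
        simp [φ]

end Shift

theorem vanishing_iff_hasse_divisibility_general {K : Type*} [Field K] {s : ℕ}
    (x : K) (y : Fin s → K) (R : Fin s → Polynomial K)
    (hR : ∀ j, Polynomial.eval x (R j) = y j)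
    (Q : MvPolynomial (Fin s) (Polynomial K)) (m : ℕ) :
    VanishesAt Q x y m ↔
      ∀ i : Fin s →₀ ℕ, (i.sum fun _ e => e) < m →
        (Polynomial.X - Polynomial.C x) ^ (m - (i.sum fun _ e => e)) ∣
          MvPolynomial.eval R (mvHasseDeriv i Q) := by
  set S := fun k => Polynomial.algEquivAevalXAddC x (R k) - Polynomial.C (y k)
  have hS : ∀ k, Polynomial.X ∣ S k := fun k => by
    simp [S, Polynomial.X_dvd_iff, Polynomial.coeff_zero_eq_eval_zero,
      ← Polynomial.comp_eq_aeval, hR]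
  rw [vanishesAt_iff_forall_X_pow_dvd,
    forall_pow_dvd_coeff_iff_forall_pow_dvd_eval_mvHasseDeriv hS]
  refine forall_congr' fun i => ?_
  rw [X_sub_C_pow_dvd_iff, algEquivAevalXAddC_eval_mvHasseDeriv x y]
  change _ ↔ i.degree < m → _
  refine ⟨fun h _ => h, fun h => ?_⟩
  rcases lt_or_ge i.degree m with hi | hi
  · exact h hi
  · rw [tsub_eq_zero_of_le hi, pow_zero]
    exact one_dvd _

/-- `(x, y)` is a zero of `Q` of multiplicity at least `m` iff for every
multi-index `i` with `|i| < m`, the polynomial `Q^{[i]}(X, R_1, ..., R_s)` is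
divisible by `(X - x)^{m - |i|}`, where the `R_j` interpolate `y_j` at `x`. -/
theorem vanishing_iff_hasse_divisibility {K : Type*} [Field K] {s : ℕ}
    (x : K) (y : Fin s → K) (R : Fin s → Polynomial K)
    (hR : ∀ j, Polynomial.eval x (R j) = y j)
    (Q : MvPolynomial (Fin s) (Polynomial K)) (m : ℕ) (hm : 0 < m) :
    VanishesAt Q x y m ↔
      ∀ i : Fin s →₀ ℕ, (i.sum fun _ e => e) < m →
        (Polynomial.X - Polynomial.C x) ^ (m - (i.sum fun _ e => e)) ∣
          MvPolynomial.eval R (mvHasseDeriv i Q) :=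
  vanishing_iff_hasse_divisibility_general x y R hR Q m
end

section
/- Let K be a field, let P_i ∈ K[X] be monic of degree M'_i and F_{i,j} ∈ K[X] with deg(F_{i,j}) < M'_i for 0 ≤ i < μ and 0 ≤ j < ν, and let N'_0,...,N'_{ν-1} be positive integers. Set β = max_h N'_h, δ_i = M'_i + β - 1, γ_j = β - N'_j, and define the reversals P̄_i = X^{M'_i} P_i(1/X), F̄_{i,j} = X^{M'_i - 1} F_{i,j}(1/X), Q̄_j = X^{N'_j - 1} Q_j(1/X), and S_{i,j} = (X^{γ_j} F̄_{i,j} / P̄_i) mod X^{δ_i} (well-defined since P̄_i(0) = 1). Then for polynomials Q_0,...,Q_{ν-1} with deg(Q_j) < N'_j for all j, the congruences Σ_j F_{i,j} Q_j ≡ 0 (mod P_i) hold for all i < μ if and only if for each i < μ there exists T_i ∈ K[X] with deg(T_i) < β - 1 such that Σ_j S_{i,j} Q̄_j ≡ T_i (mod X^{δ_i}). -/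
/-!
Reversing `A = Σ_j F_{i,j} Q_j` at degree `δ_i - 1` gives `Ā = Σ_j X^{γ_j} F̄_{i,j} Q̄_j`, and
`P_i ∣ A` becomes `Ā = P̄_i T` with `deg T < β - 1` (reverse the cofactor). Both sides have
degree `< δ_i`, so this equation is the congruence `Ā ≡ P̄_i T (mod X^{δ_i})`. Multiplying
`Σ_j S_{i,j} Q̄_j - T` by `P̄_i` gives `Ā - P̄_i T` modulo `X^{δ_i}`, and `P̄_i` is a unit modulo
`X^{δ_i}` because `P̄_i(0) = 1`.
-/

open Polynomial

namespace Polynomial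

variable {R : Type*}

section Semiring

variable [Semiring R]

theorem natDegree_le_sub_one_of_degree_lt {p : R[X]} {n : ℕ} (h : p.degree < n) :
    p.natDegree ≤ n - 1 := by
  rcases eq_or_ne p 0 with rfl | hp
  · simp
  · have := (natDegree_lt_iff_degree_lt hp).2 h
    omega

theorem natDegree_reflect_le_of_le {p : R[X]} {N : ℕ} (h : p.natDegree ≤ N) :
    (p.reflect N).natDegree ≤ N :=
  natDegree_reflect_le.trans (max_le le_rfl h)

theorem degree_reflect_lt {p : R[X]} {N n : ℕ} (hp : p.natDegree ≤ N) (hN : N < n) :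
    (p.reflect N).degree < n :=
  (degree_le_natDegree.trans (Nat.cast_le.2 (natDegree_reflect_le_of_le hp))).trans_lt
    (by exact_mod_cast hN)

theorem degree_mul_lt_of_natDegree_le_of_degree_lt {p q : R[X]} {m n : ℕ} (hp : p.natDegree ≤ m)
    (hq : q.degree < n) : (p * q).degree < (m + n : ℕ) := by
  rcases eq_or_ne q 0 with rfl | hq0
  · simp
  have := (natDegree_lt_iff_degree_lt hq0).2 hq
  exact (degree_le_of_natDegree_le (natDegree_mul_le.trans (add_le_add hp le_rfl))).trans_lt
    (by exact_mod_cast (by omega : m + q.natDegree < m + n))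

theorem eq_zero_of_X_pow_dvd_of_degree_lt {p : R[X]} {n : ℕ} (hdvd : X ^ n ∣ p)
    (hp : p.degree < n) : p = 0 := by
  ext k
  rcases lt_or_ge k n with hk | hk
  · exact X_pow_dvd_iff.1 hdvd k hk
  · exact coeff_eq_zero_of_degree_lt (hp.trans_le (by exact_mod_cast hk))

theorem reflect_mul_of_le_add {f g : R[X]} {F G : ℕ} (hf : f.natDegree ≤ F) (hg : g.natDegree ≤ G)
    (a : ℕ) : (f * g).reflect (a + (F + G)) = X ^ a * f.reflect F * g.reflect G := by
  rw [mul_assoc, ← reflect_mul f g hf hg, ← reflect_one a,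
    ← reflect_mul (F := a) 1 (f * g) (by simp) (natDegree_mul_le.trans (add_le_add hf hg)),
    one_mul]

theorem reflect_sum {ι : Type*} (s : Finset ι) (f : ι → R[X]) (N : ℕ) :
    (∑ i ∈ s, f i).reflect N = ∑ i ∈ s, (f i).reflect N := by
  ext k
  simp only [coeff_reflect, finsetSum_coeff]

section SumMul

variable {ι : Type*} {s : Finset ι} {f g : ι → R[X]} {b n : ℕ} {c : ι → ℕ}

theorem natDegree_sum_mul_le (hf : ∀ i ∈ s, (f i).natDegree ≤ b)
    (hg : ∀ i ∈ s, (g i).natDegree ≤ c i) (hc : ∀ i ∈ s, c i ≤ n) :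
    (∑ i ∈ s, f i * g i).natDegree ≤ b + n :=
  natDegree_sum_le_of_forall_le _ _ fun i hi ↦
    natDegree_mul_le.trans (add_le_add (hf i hi) ((hg i hi).trans (hc i hi)))

theorem reflect_sum_mul (hf : ∀ i ∈ s, (f i).natDegree ≤ b)
    (hg : ∀ i ∈ s, (g i).natDegree ≤ c i) {a : ι → ℕ} (hac : ∀ i ∈ s, a i + c i = n) :
    (∑ i ∈ s, f i * g i).reflect (b + n) =
      ∑ i ∈ s, X ^ a i * (f i).reflect b * (g i).reflect (c i) := by
  refine (reflect_sum _ _ _).trans (Finset.sum_congr rfl fun i hi ↦ ?_)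
  rw [← hac i hi, add_left_comm, reflect_mul_of_le_add (hf i hi) (hg i hi)]

end SumMul

theorem Monic.coeff_zero_reflect {P : R[X]} (hP : P.Monic) :
    (P.reflect P.natDegree).coeff 0 = 1 :=
  (coeff_zero_reverse P).trans hP

theorem Monic.dvd_iff_exists_reflect_eq {P A : R[X]} (hP : P.Monic) {d : ℕ}
    (hA : A.natDegree < P.natDegree + d) :
    P ∣ A ↔ ∃ T : R[X], T.degree < d ∧
      A.reflect (P.natDegree + d - 1) = P.reflect P.natDegree * T := by
  constructor
  · rintro ⟨B, rfl⟩
    rcases eq_or_ne B 0 with rfl | hB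
    · exact ⟨0, by simp, by simp⟩
    have hBd : B.natDegree < d := by
      rw [hP.natDegree_mul' hB] at hA
      omega
    refine ⟨B.reflect (d - 1), ?_, ?_⟩
    · exact degree_reflect_lt (by omega) (by omega)
    · rw [show P.natDegree + d - 1 = P.natDegree + (d - 1) by omega,
        reflect_mul _ _ le_rfl (by omega)]
  · rintro ⟨T, hT, hAT⟩
    rcases eq_or_ne T 0 with rfl | hT0
    · rw [mul_zero, reflect_eq_zero_iff] at hAT
      exact hAT ▸ dvd_zero P
    have hTd : T.natDegree < d := (natDegree_lt_iff_degree_lt hT0).2 hT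
    refine ⟨T.reflect (d - 1), ?_⟩
    rw [← reflect_reflect (p := A) (N := P.natDegree + d - 1), hAT,
      show P.natDegree + d - 1 = P.natDegree + (d - 1) by omega,
      reflect_mul _ _ (natDegree_reflect_le_of_le le_rfl) (by omega), reflect_reflect]

end Semiring

theorem X_pow_dvd_sub_iff_eq [Ring R] {f g : R[X]} {n : ℕ} (hf : f.degree < n)
    (hg : g.degree < n) : X ^ n ∣ f - g ↔ f = g :=
  ⟨fun h ↦ sub_eq_zero.1 (eq_zero_of_X_pow_dvd_of_degree_lt h
    ((degree_sub_le f g).trans_lt (max_lt hf hg))), fun h ↦ by simp [h]⟩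

theorem isCoprime_X_pow_of_isUnit_coeff_zero [CommRing R] {p : R[X]} (hp : IsUnit (p.coeff 0))
    (n : ℕ) : IsCoprime (X ^ n) p := by
  refine IsCoprime.pow_left ?_
  obtain ⟨q, hq⟩ := X_dvd_sub_C (p := p)
  rw [← sub_add_cancel p (C (p.coeff 0)), hq, add_comm]
  have hX : IsCoprime X (C (p.coeff 0)) := by
    simpa using (isCoprime_mul_unit_left_right (isUnit_C.2 hp) X 1).2 isCoprime_one_right
  exact hX.add_mul_left_right q

theorem Monic.isCoprime_X_pow_reflect [CommRing R] {P : R[X]} (hP : P.Monic) (n : ℕ) :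
    IsCoprime (X ^ n) (P.reflect P.natDegree) :=
  isCoprime_X_pow_of_isUnit_coeff_zero (hP.coeff_zero_reflect ▸ isUnit_one) n

end Polynomial

theorem IsCoprime.dvd_iff_dvd_of_dvd_mul_sub {R : Type*} [CommRing R] {a b u v : R}
    (hab : IsCoprime a b) (h : a ∣ b * u - v) : a ∣ u ↔ a ∣ v := by
  refine ⟨fun hu ↦ ?_, fun hv ↦ hab.dvd_of_dvd_mul_left ?_⟩
  · simpa using dvd_sub (hu.mul_left b) h
  · simpa using dvd_add h hv

theorem Finset.dvd_mul_sum_sub_sub_sum {R ι : Type*} [CommRing R] {s : Finset ι} {a p t : R}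
    {u v w : ι → R} (h : ∀ i ∈ s, a ∣ p * u i - v i) :
    a ∣ p * (∑ i ∈ s, u i * w i - t) - (∑ i ∈ s, v i * w i - p * t) := by
  have hsum : p * (∑ i ∈ s, u i * w i - t) - (∑ i ∈ s, v i * w i - p * t) =
      ∑ i ∈ s, (p * u i - v i) * w i := by
    simp only [mul_sub, Finset.mul_sum, sub_mul, Finset.sum_sub_distrib, mul_assoc]
    ring
  exact hsum ▸ Finset.dvd_sum fun i hi ↦ (h i hi).mul_right _

theorem extended_key_equations_general {K : Type*} [Field K] {μ ν : ℕ} (hν : 0 < ν)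
    (M' : Fin μ → ℕ) (hM' : ∀ i, 0 < M' i)
    (N' : Fin ν → ℕ) (hN' : ∀ j, 0 < N' j)
    (P : Fin μ → Polynomial K)
    (hPmonic : ∀ i, (P i).Monic) (hPdeg : ∀ i, (P i).natDegree = M' i)
    (F : Fin μ → Fin ν → Polynomial K) (hF : ∀ i j, (F i j).degree < (M' i : ℕ))
    (Q : Fin ν → Polynomial K) (hQ : ∀ j, (Q j).degree < (N' j : ℕ))
    (S : Fin μ → Fin ν → Polynomial K)
    (hS : ∀ i j, (Polynomial.X : Polynomial K) ^ (M' i + Finset.univ.sup N' - 1) ∣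
        (P i).reflect (M' i) * S i j -
          Polynomial.X ^ (Finset.univ.sup N' - N' j) * (F i j).reflect (M' i - 1)) :
    (∀ i, P i ∣ ∑ j, F i j * Q j) ↔
      (∀ i, ∃ T : Polynomial K,
        T.degree < ((Finset.univ.sup N' - 1 : ℕ) : WithBot ℕ) ∧
        (Polynomial.X : Polynomial K) ^ (M' i + Finset.univ.sup N' - 1) ∣
          (∑ j, S i j * (Q j).reflect (N' j - 1)) - T) := by
  set β := Finset.univ.sup N'
  have hNβ (j : Fin ν) : N' j ≤ β := Finset.le_sup (Finset.mem_univ j)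
  have hβ : 0 < β := (hN' ⟨0, hν⟩).trans_le (hNβ _)
  have hγ (j : Fin ν) : β - N' j + (N' j - 1) = β - 1 := by
    have := hN' j
    have := hNβ j
    omega
  refine forall_congr' fun i ↦ ?_
  have hM := hM' i
  have hF' (j : Fin ν) (_ : j ∈ Finset.univ) := natDegree_le_sub_one_of_degree_lt (hF i j)
  have hQ' (j : Fin ν) (_ : j ∈ Finset.univ) := natDegree_le_sub_one_of_degree_lt (hQ j)
  have hA : (∑ j, F i j * Q j).natDegree ≤ M' i - 1 + (β - 1) :=
    natDegree_sum_mul_le hF' hQ' fun j _ ↦ (hγ j).symm ▸ Nat.le_add_left _ _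
  have hA' : (∑ j, F i j * Q j).natDegree < (P i).natDegree + (β - 1) := by
    rw [hPdeg i]
    omega
  rw [(hPmonic i).dvd_iff_exists_reflect_eq hA', hPdeg i,
    show M' i + (β - 1) - 1 = M' i - 1 + (β - 1) by omega]
  refine exists_congr fun T ↦ and_congr_right fun hT ↦ ?_
  have hAbar := degree_reflect_lt (n := M' i + β - 1) hA (by omega)
  have hPT := degree_mul_lt_of_natDegree_le_of_degree_lt
    (natDegree_reflect_le_of_le (hPdeg i).le) hT
  rw [show M' i + (β - 1) = M' i + β - 1 by omega] at hPT
  have hcop := (hPmonic i).isCoprime_X_pow_reflect (M' i + β - 1)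
  rw [hPdeg i] at hcop
  rw [← X_pow_dvd_sub_iff_eq hAbar hPT, reflect_sum_mul hF' hQ' fun j _ ↦ hγ j]
  exact (hcop.dvd_iff_dvd_of_dvd_mul_sub (Finset.dvd_mul_sum_sub_sub_sum fun j _ ↦ hS i j)).symm

/-- Derivation of the extended key equations: with `β = max_h N'_h`,
`δ_i = M'_i + β - 1`, `γ_j = β - N'_j`, the reversals
`P̄_i = X^{M'_i} P_i(1/X)`, `F̄_{i,j} = X^{M'_i-1} F_{i,j}(1/X)`,
`Q̄_j = X^{N'_j-1} Q_j(1/X)`, and `S_{i,j} = X^{γ_j} F̄_{i,j} / P̄_i mod X^{δ_i}`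
(characterized by `P̄_i S_{i,j} ≡ X^{γ_j} F̄_{i,j} (mod X^{δ_i})` and
`deg S_{i,j} < δ_i`, well-defined since `P̄_i(0) = 1`), the congruences
`Σ_j F_{i,j} Q_j ≡ 0 (mod P_i)` for all `i` are equivalent to: for each `i`
there is `T_i` with `deg T_i < β - 1` and
`Σ_j S_{i,j} Q̄_j ≡ T_i (mod X^{δ_i})`. -/
theorem extended_key_equations {K : Type*} [Field K] {μ ν : ℕ} (hν : 0 < ν)
    (M' : Fin μ → ℕ) (hM' : ∀ i, 0 < M' i)
    (N' : Fin ν → ℕ) (hN' : ∀ j, 0 < N' j)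
    (P : Fin μ → Polynomial K)
    (hPmonic : ∀ i, (P i).Monic) (hPdeg : ∀ i, (P i).natDegree = M' i)
    (F : Fin μ → Fin ν → Polynomial K) (hF : ∀ i j, (F i j).degree < (M' i : ℕ))
    (Q : Fin ν → Polynomial K) (hQ : ∀ j, (Q j).degree < (N' j : ℕ))
    (S : Fin μ → Fin ν → Polynomial K)
    (hSdeg : ∀ i j, (S i j).degree < ((M' i + Finset.univ.sup N' - 1 : ℕ) : WithBot ℕ))
    (hS : ∀ i j, (Polynomial.X : Polynomial K) ^ (M' i + Finset.univ.sup N' - 1) ∣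
        (P i).reflect (M' i) * S i j -
          Polynomial.X ^ (Finset.univ.sup N' - N' j) * (F i j).reflect (M' i - 1)) :
    (∀ i, P i ∣ ∑ j, F i j * Q j) ↔
      (∀ i, ∃ T : Polynomial K,
        T.degree < ((Finset.univ.sup N' - 1 : ℕ) : WithBot ℕ) ∧
        (Polynomial.X : Polynomial K) ^ (M' i + Finset.univ.sup N' - 1) ∣
          (∑ j, S i j * (Q j).reflect (N' j - 1)) - T) :=
  extended_key_equations_general hν M' hM' N' hN' P hPmonic hPdeg F hF Q hQ S hS
end

section
/- Let K be a field and consider Problem MultivariateInterpolation with parameters s, ℓ, n, multiplicities m_1,...,m_n, bound b, weights k = (k_1,...,k_s), and points with pairwise distinct x-coordinates. Suppose m = max_i m_i satisfies m > ℓ. Define P = Π_{i : m_i > ℓ} (X - x_i)^{m_i - ℓ} and d = deg(P). Then any polynomial Q solving the problem (nonzero, deg_Y(Q) ≤ ℓ, wdeg_k(Q) < b, vanishing at each point (x_i, y_i) with multiplicity ≥ m_i) is divisible by P, and Q ↦ Q/P is a bijection between solutions for parameters (s, ℓ, n, m_1,...,m_n, b, k) and solutions for parameters (s, ℓ, n,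 m'_1,...,m'_n, b - d, k), where m'_i = min(m_i, ℓ). -/
/-- `Q` is a solution of Problem MultivariateInterpolation with list-size `ℓ`,
multiplicities `mm`, weighted-degree bound `b`, weights `k`, and points
`(x i, y i)`: `Q` is nonzero, `deg_Y Q ≤ ℓ`, `wdeg_k Q < b`, and `Q` vanishes
at each point with multiplicity at least `mm i`. -/
def IsSolution {K : Type*} [Field K] {s n : ℕ} (ℓ : ℕ) (mm : Fin n → ℕ) (b : ℤ)
    (k : Fin s → ℤ) (x : Fin n → K) (y : Fin n → Fin s → K)
    (Q : MvPolynomial (Fin s) (Polynomial K)) : Prop :=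
  Q ≠ 0 ∧
  (∀ j : Fin s →₀ ℕ, MvPolynomial.coeff j Q ≠ 0 → (j.sum fun _ e => e) ≤ ℓ) ∧
  (∀ j : Fin s →₀ ℕ, MvPolynomial.coeff j Q ≠ 0 →
      ((MvPolynomial.coeff j Q).natDegree : ℤ) + ∑ r, (j r : ℤ) * k r < b) ∧
  (∀ i : Fin n, VanishesAt Q (x i) (y i) (mm i))

/-!
Translating `(xᵢ, yᵢ)` to the origin is a ring automorphism of `K[X][Y]` that turns multiplication
by `C P` into multiplication by `C (X ^ eᵢ * u)` with `u(0) ≠ 0`, where `eᵢ` is the multiplicity of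
`xᵢ` as a root of `P`. Hence `C P * Q` vanishes to order `mᵢ` at `(xᵢ, yᵢ)` exactly when `Q`
vanishes to order `mᵢ - eᵢ = min mᵢ ℓ`. Conversely, a solution has `Y`-degree at most `ℓ`, so after
the translation every coefficient is divisible by `X ^ (mᵢ - ℓ)`; translating back,
`(X - xᵢ) ^ (mᵢ - ℓ)` divides `Q`, and these factors are pairwise coprime.
-/

open Polynomial

theorem Prime.pow_dvd_pow_mul_mul_iff {α : Type*} [CommMonoidWithZero α] [IsCancelMulZero α]
    {π u f : α} (hπ : Prime π) (hu : ¬π ∣ u) (a e : ℕ) :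
    π ^ a ∣ π ^ e * u * f ↔ π ^ (a - e) ∣ f := by
  rcases le_or_gt a e with hae | hea
  · simp only [Nat.sub_eq_zero_of_le hae, pow_zero, one_dvd, iff_true]
    exact dvd_mul_of_dvd_left (dvd_mul_of_dvd_left (pow_dvd_pow π hae) u) f
  · rw [← Nat.add_sub_cancel' hea.le, pow_add, Nat.add_sub_cancel_left, mul_assoc,
      mul_dvd_mul_iff_left (pow_ne_zero e hπ.ne_zero)]
    exact ⟨hπ.pow_dvd_of_dvd_mul_left _ hu, fun h => h.mul_left u⟩

theorem Polynomial.X_pow_dvd_taylor_mul_iff {R : Type*} [CommRing R] [IsDomain R] {p : R[X]}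
    (hp : p ≠ 0) (x : R) (f : R[X]) (a : ℕ) :
    X ^ a ∣ taylor x p * f ↔ X ^ (a - p.rootMultiplicity x) ∣ f := by
  obtain ⟨q, hpq, hq⟩ := p.exists_eq_pow_rootMultiplicity_mul_and_not_dvd hp x
  have hXq : ¬X ∣ taylor x q := by
    rwa [X_dvd_iff, taylor_coeff_zero, ← IsRoot.def, ← dvd_iff_isRoot]
  conv_lhs => rw [hpq, taylor_mul, taylor_pow, map_sub, taylor_X, taylor_C, add_sub_cancel_right]
  exact prime_X.pow_dvd_pow_mul_mul_iff hXq a _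

theorem Polynomial.rootMultiplicity_prod_X_sub_C_pow {R ι : Type*} [CommRing R] [IsDomain R]
    [DecidableEq ι] {x : ι → R} (hx : Function.Injective x) (S : Finset ι) (t : ι → ℕ) (i : ι) :
    (∏ j ∈ S, (X - C (x j)) ^ t j).rootMultiplicity (x i) = if i ∈ S then t i else 0 := by
  have hne : ∏ j ∈ S, (X - C (x j)) ^ t j ≠ 0 :=
    Finset.prod_ne_zero_iff.mpr fun j _ => pow_ne_zero _ (X_sub_C_ne_zero (x j))
  classical
  rw [← count_roots, roots_prod _ _ hne, Multiset.count_bind]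
  simp [roots_pow, Multiset.count_nsmul, Multiset.count_singleton, hx.eq_iff, eq_comm (a := i)]

theorem MvPolynomial.totalDegree_eval₂_C_comp_le {R S σ : Type*} [CommSemiring R]
    [CommSemiring S] (f : R →+* S) {g : σ → MvPolynomial σ S} (hg : ∀ i, (g i).totalDegree ≤ 1)
    (p : MvPolynomial σ R) : (p.eval₂ (MvPolynomial.C.comp f) g).totalDegree ≤ p.totalDegree := by
  conv_lhs => rw [p.as_sum, MvPolynomial.eval₂_sum]
  refine MvPolynomial.totalDegree_finsetSum_le fun j hj => ?_
  rw [MvPolynomial.eval₂_monomial]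
  refine (MvPolynomial.totalDegree_mul _ _).trans ?_
  rw [RingHom.comp_apply, MvPolynomial.totalDegree_C, zero_add]
  refine (MvPolynomial.totalDegree_finsetProd _ _).trans ?_
  refine le_trans ?_ (MvPolynomial.le_totalDegree hj)
  refine Finset.sum_le_sum fun i _ => (MvPolynomial.totalDegree_pow _ _).trans ?_
  simpa using Nat.mul_le_mul_left (j i) (hg i)

theorem C_prod_X_sub_C_pow_dvd {K ι σ : Type*} [Field K] {x : ι → K}
    (hx : Function.Injective x) (S : Finset ι) (t : ι → ℕ) {Q : MvPolynomial σ K[X]}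
    (h : ∀ i ∈ S, MvPolynomial.C ((X - C (x i)) ^ t i) ∣ Q) :
    MvPolynomial.C (∏ i ∈ S, (X - C (x i)) ^ t i) ∣ Q := by
  simp only [MvPolynomial.C_dvd_iff_dvd_coeff] at h ⊢
  exact fun j => Finset.prod_dvd_of_coprime
    (fun a _ b _ hab => ((pairwise_coprime_X_sub_C hx) hab).pow) fun i hi => h i hi j

section Shift

variable {K : Type*} [Field K] {s : ℕ}

noncomputable def shiftPointHom (x : K) (y : Fin s → K) :
    MvPolynomial (Fin s) K[X] →+* MvPolynomial (Fin s) K[X] :=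
  MvPolynomial.eval₂Hom (MvPolynomial.C.comp (aeval (X + C x)).toRingHom)
    fun i => MvPolynomial.X i + MvPolynomial.C (C (y i))

theorem shiftPointHom_apply (x : K) (y : Fin s → K) (Q : MvPolynomial (Fin s) K[X]) :
    shiftPointHom x y Q = shiftPoint x y Q :=
  rfl

theorem shiftPointHom_C (x : K) (y : Fin s → K) (p : K[X]) :
    shiftPointHom x y (MvPolynomial.C p) = MvPolynomial.C (taylor x p) :=
  MvPolynomial.eval₂Hom_C _ _ p

theorem shiftPointHom_X (x : K) (y : Fin s → K) (i : Fin s) :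
    shiftPointHom x y (MvPolynomial.X i) = MvPolynomial.X i + MvPolynomial.C (C (y i)) :=
  MvPolynomial.eval₂Hom_X' _ _ i

theorem shiftPointHom_neg_shiftPoint (x : K) (y : Fin s → K) (Q : MvPolynomial (Fin s) K[X]) :
    shiftPointHom (-x) (-y) (shiftPoint x y Q) = Q := by
  have h : (shiftPointHom (-x) (-y)).comp (shiftPointHom x y) = RingHom.id _ :=
    MvPolynomial.ringHom_ext (fun p => by simp [shiftPointHom_C, taylor_taylor])
      fun i => by simp [shiftPointHom_X, shiftPointHom_C]
  exact RingHom.congr_fun h Q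

theorem C_X_sub_C_pow_dvd_iff (x : K) (y : Fin s → K) (Q : MvPolynomial (Fin s) K[X]) (t : ℕ) :
    MvPolynomial.C ((X - C x) ^ t) ∣ Q ↔ MvPolynomial.C (X ^ t) ∣ shiftPoint x y Q := by
  constructor
  · intro h
    rw [← shiftPointHom_apply]
    simpa [shiftPointHom_C] using map_dvd (shiftPointHom x y) h
  · intro h
    simpa [shiftPointHom_C, shiftPointHom_neg_shiftPoint, sub_eq_add_neg]
      using map_dvd (shiftPointHom (-x) (-y)) h

theorem coeff_shiftPoint_C_mul (x : K) (y : Fin s → K) (p : K[X])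
    (Q : MvPolynomial (Fin s) K[X]) (j : Fin s →₀ ℕ) :
    (shiftPoint x y (MvPolynomial.C p * Q)).coeff j = taylor x p * (shiftPoint x y Q).coeff j := by
  rw [← shiftPointHom_apply, map_mul, shiftPointHom_C, MvPolynomial.coeff_C_mul,
    shiftPointHom_apply]

theorem totalDegree_shiftPoint_le (x : K) (y : Fin s → K) (Q : MvPolynomial (Fin s) K[X]) :
    (shiftPoint x y Q).totalDegree ≤ Q.totalDegree := by
  refine MvPolynomial.totalDegree_eval₂_C_comp_le _ (fun i => ?_) Q
  refine (MvPolynomial.totalDegree_add _ _).trans ?_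
  simp [MvPolynomial.totalDegree_X, MvPolynomial.totalDegree_C]

end Shift

section Vanishing

variable {K : Type*} [Field K] {s : ℕ}

theorem vanishesAt_iff_X_pow_dvd_coeff (Q : MvPolynomial (Fin s) K[X]) (x : K) (y : Fin s → K)
    (m : ℕ) :
    VanishesAt Q x y m ↔
      ∀ j : Fin s →₀ ℕ, X ^ (m - j.sum fun _ e => e) ∣ (shiftPoint x y Q).coeff j := by
  simp only [VanishesAt, X_pow_dvd_iff, lt_tsub_iff_right]

theorem vanishesAt_C_mul_iff {p : K[X]} (hp : p ≠ 0) (Q : MvPolynomial (Fin s) K[X]) (x : K)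
    (y : Fin s → K) (m : ℕ) :
    VanishesAt (MvPolynomial.C p * Q) x y m ↔ VanishesAt Q x y (m - p.rootMultiplicity x) := by
  simp only [vanishesAt_iff_X_pow_dvd_coeff, coeff_shiftPoint_C_mul,
    X_pow_dvd_taylor_mul_iff hp, Nat.sub_right_comm]

theorem C_X_sub_C_pow_dvd_of_vanishesAt {Q : MvPolynomial (Fin s) K[X]} {ℓ : ℕ}
    (hQ : Q.totalDegree ≤ ℓ) {x : K} {y : Fin s → K} {m : ℕ} (h : VanishesAt Q x y m) :
    MvPolynomial.C ((X - C x) ^ (m - ℓ)) ∣ Q := by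
  rw [C_X_sub_C_pow_dvd_iff x y, MvPolynomial.C_dvd_iff_dvd_coeff]
  intro j
  by_cases hj : (shiftPoint x y Q).coeff j = 0
  · simp [hj]
  have hjℓ : (j.sum fun _ e => e) ≤ ℓ :=
    ((MvPolynomial.le_totalDegree (MvPolynomial.mem_support_iff.mpr hj)).trans
      (totalDegree_shiftPoint_le x y Q)).trans hQ
  exact (pow_dvd_pow X (by omega)).trans ((vanishesAt_iff_X_pow_dvd_coeff Q x y m).mp h j)

end Vanishing

section Solutions

variable {K : Type*} [Field K] {s n : ℕ} {ℓ : ℕ} {mm : Fin n → ℕ} {b : ℤ} {k : Fin s → ℤ}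
  {x : Fin n → K} {y : Fin n → Fin s → K}

theorem IsSolution.totalDegree_le {Q : MvPolynomial (Fin s) K[X]}
    (hQ : IsSolution ℓ mm b k x y Q) : Q.totalDegree ≤ ℓ :=
  Finset.sup_le fun j hj => hQ.2.1 j (MvPolynomial.mem_support_iff.mp hj)

theorem isSolution_C_mul_iff {mm' : Fin n → ℕ} {P : K[X]} (hP : P ≠ 0)
    {Q : MvPolynomial (Fin s) K[X]}
    (hvan : ∀ i, VanishesAt (MvPolynomial.C P * Q) (x i) (y i) (mm i) ↔
      VanishesAt Q (x i) (y i) (mm' i)) :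
    IsSolution ℓ mm b k x y (MvPolynomial.C P * Q) ↔
      IsSolution ℓ mm' (b - P.natDegree) k x y Q := by
  have hcoeff : ∀ j, (MvPolynomial.C P * Q).coeff j ≠ 0 ↔ Q.coeff j ≠ 0 := by
    simp [MvPolynomial.coeff_C_mul, hP]
  have hdeg : ∀ j, Q.coeff j ≠ 0 →
      ((MvPolynomial.C P * Q).coeff j).natDegree = P.natDegree + (Q.coeff j).natDegree :=
    fun j hj => by rw [MvPolynomial.coeff_C_mul, natDegree_mul hP hj]
  simp only [IsSolution, hcoeff, hvan, mul_ne_zero_iff, MvPolynomial.C_eq_zero, hP, ne_eq,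
    not_false_eq_true, true_and]
  refine and_congr_right fun _ => and_congr_right fun _ => and_congr_left fun _ =>
    forall_congr' fun j => forall_congr' fun hj => ?_
  rw [hdeg j hj]
  push_cast
  omega

end Solutions

theorem multiplicity_reduction_general {K : Type*} [Field K] {s n : ℕ} (ℓ : ℕ)
    (mm : Fin n → ℕ) (b : ℤ) (k : Fin s → ℤ)
    (x : Fin n → K) (hx : Function.Injective x) (y : Fin n → Fin s → K) :
    (∀ Q : MvPolynomial (Fin s) (Polynomial K), IsSolution ℓ mm b k x y Q →
        MvPolynomial.C (∏ i ∈ Finset.univ.filter fun i => ℓ < mm i,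
          (Polynomial.X - Polynomial.C (x i)) ^ (mm i - ℓ)) ∣ Q) ∧
    (∀ Q : MvPolynomial (Fin s) (Polynomial K),
      IsSolution ℓ mm b k x y Q ↔
        ∃ Q' : MvPolynomial (Fin s) (Polynomial K),
          IsSolution ℓ (fun i => min (mm i) ℓ)
            (b - ((∏ i ∈ Finset.univ.filter fun i => ℓ < mm i,
                (Polynomial.X - Polynomial.C (x i)) ^ (mm i - ℓ)).natDegree : ℤ))
            k x y Q' ∧
          Q = MvPolynomial.C (∏ i ∈ Finset.univ.filter fun i => ℓ < mm i,
                (Polynomial.X - Polynomial.C (x i)) ^ (mm i - ℓ)) * Q') := by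
  set P := ∏ i ∈ Finset.univ.filter fun i => ℓ < mm i, (X - C (x i)) ^ (mm i - ℓ)
  have hP : P ≠ 0 :=
    Finset.prod_ne_zero_iff.mpr fun i _ => pow_ne_zero _ (X_sub_C_ne_zero (x i))
  have hmult : ∀ i, P.rootMultiplicity (x i) = mm i - min (mm i) ℓ := fun i => by
    rw [rootMultiplicity_prod_X_sub_C_pow hx]
    split_ifs with hi <;> simp only [Finset.mem_filter, Finset.mem_univ, true_and] at hi <;> omega
  have hvan : ∀ i Q', VanishesAt (MvPolynomial.C P * Q') (x i) (y i) (mm i) ↔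
      VanishesAt Q' (x i) (y i) (min (mm i) ℓ) := fun i Q' => by
    rw [vanishesAt_C_mul_iff hP, hmult, Nat.sub_sub_self (min_le_left _ _)]
  have hdvd : ∀ Q, IsSolution ℓ mm b k x y Q → MvPolynomial.C P ∣ Q := fun Q hQ =>
    C_prod_X_sub_C_pow_dvd hx _ _ fun i _ =>
      C_X_sub_C_pow_dvd_of_vanishesAt hQ.totalDegree_le (hQ.2.2.2 i)
  refine ⟨hdvd, fun Q => ⟨fun hQ => ?_, ?_⟩⟩
  · obtain ⟨Q', rfl⟩ := hdvd Q hQ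
    exact ⟨Q', (isSolution_C_mul_iff hP (hvan · Q')).mp hQ, rfl⟩
  · rintro ⟨Q', hQ', rfl⟩
    exact (isSolution_C_mul_iff hP (hvan · Q')).mpr hQ'

/-- Reduction of multiplicities larger than `ℓ`: with
`P = Π_{i : m_i > ℓ} (X - x_i)^{m_i - ℓ}` and `d = deg P`, every solution `Q`
(for multiplicities `m_i`, bound `b`) is divisible by `P`, and `Q ↦ Q/P` is a
bijection between solutions for `(m_1,...,m_n, b)` and solutions for
`(min(m_1,ℓ),...,min(m_n,ℓ), b - d)`. -/
theorem multiplicity_reduction {K : Type*} [Field K] {s n : ℕ} (ℓ : ℕ) (hℓ : 0 < ℓ)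
    (mm : Fin n → ℕ) (hmm : ∀ i, 0 < mm i) (b : ℤ) (k : Fin s → ℤ)
    (x : Fin n → K) (hx : Function.Injective x) (y : Fin n → Fin s → K)
    (hm : ℓ < Finset.univ.sup mm) :
    (∀ Q : MvPolynomial (Fin s) (Polynomial K), IsSolution ℓ mm b k x y Q →
        MvPolynomial.C (∏ i ∈ Finset.univ.filter fun i => ℓ < mm i,
          (Polynomial.X - Polynomial.C (x i)) ^ (mm i - ℓ)) ∣ Q) ∧
    (∀ Q : MvPolynomial (Fin s) (Polynomial K),
      IsSolution ℓ mm b k x y Q ↔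
        ∃ Q' : MvPolynomial (Fin s) (Polynomial K),
          IsSolution ℓ (fun i => min (mm i) ℓ)
            (b - ((∏ i ∈ Finset.univ.filter fun i => ℓ < mm i,
                (Polynomial.X - Polynomial.C (x i)) ^ (mm i - ℓ)).natDegree : ℤ))
            k x y Q' ∧
          Q = MvPolynomial.C (∏ i ∈ Finset.univ.filter fun i => ℓ < mm i,
                (Polynomial.X - Polynomial.C (x i)) ^ (mm i - ℓ)) * Q') :=
  multiplicity_reduction_general ℓ mm b k x hx y
end

section
/- Let K be a field and consider Problem MultivariateInterpolation with parameters s, ℓ, n, m_1,...,m_n, b, k_1,...,k_s and points with pairwise distinct x-coordinates x_1,...,x_n. Suppose k_j ≥ n for all j = 1,...,s. Let P = Π_{1 ≤ i ≤ n} (X - x_i)^{m_i} and d = deg(P) = Σ_i m_i. If b ≤ d then the problem has no solution; if b > d then P (viewed as an element of K[X, Y_1,...,Y_s] not involving the Y variables) is a solution. -/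
namespace MonomialOrder

open MvPolynomial

variable {σ R : Type*} [CommRing R] (m : MonomialOrder σ) (c : σ → R)

theorem monic_aeval_X_add_C_monomial (d : σ →₀ ℕ) :
    m.Monic (aeval (fun i => X i + C (c i)) (monomial d (1 : R))) := by
  rw [aeval_monomial, map_one, one_mul]
  exact Monic.prod fun i _ => (m.monic_X_add_C i (c i)).pow

theorem degree_aeval_X_add_C_monomial [Nontrivial R] (d : σ →₀ ℕ) :
    m.degree (aeval (fun i => X i + C (c i)) (monomial d (1 : R))) = d := by
  rw [aeval_monomial, map_one, one_mul, Finsupp.prod, degree_prod_of_regular]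
  · conv_rhs => rw [← d.sum_single]
    refine Finset.sum_congr rfl fun i _ => ?_
    rw [degree_pow_of_pow_leadingCoeff_ne_zero, degree_X_add_C, Finsupp.smul_single_one]
    rw [(m.monic_X_add_C i (c i)).leadingCoeff_eq_one, one_pow]
    exact one_ne_zero
  · intro i _
    rw [((m.monic_X_add_C i (c i)).pow).leadingCoeff_eq_one]
    exact isRegular_one

theorem coeff_aeval_X_add_C_monomial_of_le {v d : σ →₀ ℕ} (h : v ≼[m] d) (a : R) :
    coeff d (aeval (fun i => X i + C (c i)) (monomial v a)) = coeff d (monomial v a) := by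
  nontriviality R
  classical
  rw [← mul_one a, ← C_mul_monomial, map_mul, aeval_C, algebraMap_eq, coeff_C_mul,
    coeff_C_mul]
  rcases eq_or_lt_of_le h with hvd | hvd
  · rw [m.toSyn.injective hvd, coeff_monomial, if_pos rfl]
    congr 1
    simpa only [degree_aeval_X_add_C_monomial] using
      (m.monic_aeval_X_add_C_monomial c d).coeff_degree
  · rw [coeff_monomial, if_neg (fun h => hvd.ne (congrArg m.toSyn h)), m.coeff_eq_zero_of_lt]
    rwa [degree_aeval_X_add_C_monomial]

theorem coeff_aeval_X_add_C_of_degree_le {p : MvPolynomial σ R} {d : σ →₀ ℕ}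
    (h : m.degree p ≼[m] d) :
    coeff d (aeval (fun i => X i + C (c i)) p) = coeff d p := by
  conv_lhs => rw [p.as_sum, map_sum, coeff_sum]
  conv_rhs => rw [p.as_sum, coeff_sum]
  exact Finset.sum_congr rfl fun v hv =>
    m.coeff_aeval_X_add_C_monomial_of_le c ((m.le_degree hv).trans h) _

end MonomialOrder

open Polynomial in
theorem Polynomial.X_sub_C_pow_dvd_iff_coeff_taylor {R : Type*} [CommRing R] {r : R}
    {p : R[X]} {n : ℕ} : (X - C r) ^ n ∣ p ↔ ∀ h < n, (taylor r p).coeff h = 0 := by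
  have hX : taylor r (X - C r) = X := by rw [map_sub, taylor_X, taylor_C, add_sub_cancel_right]
  rw [← map_dvd_iff (taylorEquiv r)]
  change taylor r ((X - C r) ^ n) ∣ taylor r p ↔ _
  rw [taylor_pow, hX, X_pow_dvd_iff]

open Polynomial in
theorem Polynomial.natDegree_prod_X_sub_C_pow {R ι : Type*} [CommRing R] [Nontrivial R]
    (s : Finset ι) (x : ι → R) (e : ι → ℕ) :
    (∏ i ∈ s, (X - C (x i)) ^ e i).natDegree = ∑ i ∈ s, e i := by
  rw [natDegree_prod_of_monic _ _ fun i _ => (monic_X_sub_C (x i)).pow (e i)]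
  exact Finset.sum_congr rfl fun i _ => by
    rw [(monic_X_sub_C (x i)).natDegree_pow, natDegree_X_sub_C, mul_one]

open Polynomial in
theorem Polynomial.sum_le_natDegree_of_X_sub_C_pow_dvd {K ι : Type*} [Field K] [Fintype ι]
    {x : ι → K} (hx : Function.Injective x) {e : ι → ℕ} {p : K[X]} (hp : p ≠ 0)
    (hdvd : ∀ i, (X - C (x i)) ^ e i ∣ p) : ∑ i, e i ≤ p.natDegree := by
  have hprod : ∏ i, (X - C (x i)) ^ e i ∣ p :=
    Finset.prod_dvd_of_coprime (fun i _ j _ hij => (pairwise_coprime_X_sub_C hx hij).pow)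
      fun i _ => hdvd i
  simpa only [natDegree_prod_X_sub_C_pow] using natDegree_le_of_dvd hprod hp

section Interpolation

open MvPolynomial
open scoped Polynomial MonomialOrder

variable {K : Type*} [Field K] {s : ℕ}

theorem coeff_shiftPoint_of_degree_le (m : MonomialOrder (Fin s)) (x : K) (y : Fin s → K)
    {Q : MvPolynomial (Fin s) K[X]} {j : Fin s →₀ ℕ} (h : m.degree Q ≼[m] j) :
    coeff j (shiftPoint x y Q) = Polynomial.taylor x (coeff j Q) := by
  have hmap : shiftPoint x y Q = aeval (fun k => X k + C (Polynomial.C (y k)))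
      (map (Polynomial.aeval (Polynomial.X + Polynomial.C x)).toRingHom Q) :=
    (eval₂_map _ _ _ _).symm
  have hdeg : m.degree (map (Polynomial.aeval (Polynomial.X + Polynomial.C x)).toRingHom Q)
      ≼[m] j :=
    m.degree_le_iff.2 fun v hv => (m.le_degree (support_map_subset _ _ hv)).trans h
  rw [hmap, m.coeff_aeval_X_add_C_of_degree_le _ hdeg, coeff_map, Polynomial.taylor_apply,
    Polynomial.comp_eq_aeval]
  rfl

theorem shiftPoint_C (x : K) (y : Fin s → K) (p : K[X]) :
    shiftPoint x y (C p) = C (Polynomial.taylor x p) := by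
  rw [shiftPoint, eval₂_C, RingHom.comp_apply, Polynomial.taylor_apply, Polynomial.comp_eq_aeval]
  rfl

theorem VanishesAt.X_sub_C_pow_dvd_leadingCoeff (m : MonomialOrder (Fin s))
    {Q : MvPolynomial (Fin s) K[X]} {x : K} {y : Fin s → K} {μ : ℕ} (hQ : VanishesAt Q x y μ) :
    (Polynomial.X - Polynomial.C x) ^ (μ - (m.degree Q).degree) ∣ m.leadingCoeff Q := by
  rw [Polynomial.X_sub_C_pow_dvd_iff_coeff_taylor]
  intro h hh
  rw [MonomialOrder.leadingCoeff, ← coeff_shiftPoint_of_degree_le m x y le_rfl]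
  exact hQ _ h (by change h + (m.degree Q).degree < μ; omega)

theorem vanishesAt_C_iff {p : K[X]} {x : K} {y : Fin s → K} {μ : ℕ} :
    VanishesAt (C p) x y μ ↔ (Polynomial.X - Polynomial.C x) ^ μ ∣ p := by
  rw [Polynomial.X_sub_C_pow_dvd_iff_coeff_taylor, VanishesAt, shiftPoint_C]
  refine ⟨fun h e he => by simpa using h 0 e (by simpa using he), fun h j e he => ?_⟩
  rw [coeff_C]
  split_ifs with hj
  · subst hj
    exact h e (by simpa using he)
  · rw [Polynomial.coeff_zero]

variable {n ℓ : ℕ} {mm : Fin n → ℕ} {b : ℤ} {k : Fin s → ℤ} {x : Fin n → K}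
  {y : Fin n → Fin s → K}

theorem IsSolution.sum_lt {Q : MvPolynomial (Fin s) K[X]}
    (hk : ∀ j, (n : ℤ) ≤ k j) (hx : Function.Injective x) (hQ : IsSolution ℓ mm b k x y Q) :
    ∑ i, (mm i : ℤ) < b := by
  obtain ⟨hQ0, -, hwdeg, hvan⟩ := hQ
  let m : MonomialOrder (Fin s) := MonomialOrder.lex
  set j := m.degree Q
  set L := j.degree with hL
  have hj : coeff j Q ≠ 0 := m.coeff_degree_ne_zero_iff.2 hQ0
  have hdvd : ∑ i, (mm i - L) ≤ (coeff j Q).natDegree :=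
    Polynomial.sum_le_natDegree_of_X_sub_C_pow_dvd hx hj fun i =>
      (hvan i).X_sub_C_pow_dvd_leadingCoeff m
  have hsplit : ∑ i, mm i ≤ ∑ i, (mm i - L) + n * L := by
    calc ∑ i, mm i ≤ ∑ i, (mm i - L + L) := Finset.sum_le_sum fun i _ => le_tsub_add
      _ = ∑ i, (mm i - L) + n * L := by simp [Finset.sum_add_distrib]
  have hweight : (n : ℤ) * L ≤ ∑ r, (j r : ℤ) * k r := by
    rw [hL, Finsupp.degree_eq_sum, Nat.cast_sum, Finset.mul_sum]
    exact Finset.sum_le_sum fun r _ => by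
      rw [mul_comm]
      exact mul_le_mul_of_nonneg_left (hk r) (Nat.cast_nonneg _)
  calc ∑ i, (mm i : ℤ) ≤ (coeff j Q).natDegree + n * L := by
        exact_mod_cast hsplit.trans (Nat.add_le_add_right hdvd _)
    _ ≤ (coeff j Q).natDegree + ∑ r, (j r : ℤ) * k r := by linarith
    _ < b := hwdeg j hj

theorem isSolution_C_prod_X_sub_C_pow (hb : ∑ i, (mm i : ℤ) < b) :
    IsSolution ℓ mm b k x y (C (∏ i, (Polynomial.X - Polynomial.C (x i)) ^ mm i)) := by
  have hsupp : ∀ {j : Fin s →₀ ℕ} {p : K[X]}, coeff j (C p) ≠ 0 → j = 0 :=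
    fun {j} _ hj => by_contra fun h => hj (by rw [coeff_C, if_neg (Ne.symm h)])
  refine ⟨?_, fun j hj => ?_, fun j hj => ?_, fun i => ?_⟩
  · rw [Ne, C_eq_zero]
    exact (Polynomial.monic_prod_of_monic _ _ fun i _ =>
      (Polynomial.monic_X_sub_C (x i)).pow (mm i)).ne_zero
  · simp [hsupp hj]
  · rw [hsupp hj, coeff_C, if_pos rfl, Polynomial.natDegree_prod_X_sub_C_pow]
    simpa using hb
  · exact vanishesAt_C_iff.2 (Finset.dvd_prod_of_mem _ (Finset.mem_univ i))

end Interpolation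

theorem large_weights_solution_general {K : Type*} [Field K] {s n : ℕ} (ℓ : ℕ)
    (mm : Fin n → ℕ) (b : ℤ) (k : Fin s → ℤ)
    (hk : ∀ j, (n : ℤ) ≤ k j)
    (x : Fin n → K) (hx : Function.Injective x) (y : Fin n → Fin s → K) :
    (b ≤ ∑ i, (mm i : ℤ) →
        ¬ ∃ Q : MvPolynomial (Fin s) (Polynomial K), IsSolution ℓ mm b k x y Q) ∧
    (∑ i, (mm i : ℤ) < b →
        IsSolution ℓ mm b k x y
          (MvPolynomial.C (∏ i, (Polynomial.X - Polynomial.C (x i)) ^ mm i))) :=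
  ⟨fun hb ⟨_, hQ⟩ => hb.not_gt (hQ.sum_lt hk hx), isSolution_C_prod_X_sub_C_pow⟩

/-- When all weights satisfy `k_j ≥ n`: with `P = Π_i (X - x_i)^{m_i}` and
`d = Σ_i m_i = deg P`, if `b ≤ d` then Problem MultivariateInterpolation has no
solution, and if `b > d` then `P` (viewed in `K[X,Y_1,...,Y_s]`) is a
solution. -/
theorem large_weights_solution {K : Type*} [Field K] {s n : ℕ} (ℓ : ℕ) (hℓ : 0 < ℓ)
    (mm : Fin n → ℕ) (hmm : ∀ i, 0 < mm i) (b : ℤ) (k : Fin s → ℤ)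
    (hk : ∀ j, (n : ℤ) ≤ k j)
    (x : Fin n → K) (hx : Function.Injective x) (y : Fin n → Fin s → K) :
    (b ≤ ∑ i, (mm i : ℤ) →
        ¬ ∃ Q : MvPolynomial (Fin s) (Polynomial K), IsSolution ℓ mm b k x y Q) ∧
    (∑ i, (mm i : ℤ) < b →
        IsSolution ℓ mm b k x y
          (MvPolynomial.C (∏ i, (Polynomial.X - Polynomial.C (x i)) ^ mm i))) :=
  large_weights_solution_general ℓ mm b k hk x hx y
end
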